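/- arXiv:2102.06258 — 4 statements merged into one kernel-verified Lean document; each statement's English description precedes it below -/
import Mathlib

section
/- Let (Ω, μ) be a probability space and X : Ω → ℝⁿ a measurable map with E[‖X‖²] < ∞. Suppose there are constants 0 < σ ≤ ρ such that σ‖v‖² ≤ E[⟨v, X⟩²] ≤ ρ‖v‖² for every v ∈ ℝⁿ. Let Φ : L²(μ; ℝ) → L²(μ; ℝ) be Lipschitz with constant τ ≥ 0 satisfying τρ < σ. For W ∈ ℝⁿ write ℓ_W ∈ L²(μ) for the function ω ↦ ⟨W, X(ω)⟩, and define h : ℝⁿ → ℝⁿ by h(W) = E[ X · (ℓ_W − Φ(ℓ_W)) ] (the expectation of the ℝⁿ-valued integrand). Then for all W, W' ∈ ℝⁿ one has ⟨W − W', h(W) − h(W')⟩ ≥ (σ − τρ)‖W − W'‖², i.e. h is strongly monotone with constant δ := σ − τρ > 0. -/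
open MeasureTheory

open scoped RealInnerProductSpace

/-! Writing `Q = ℓ (W - W')` and `G = Φ (ℓ W) - Φ (ℓ W')`, the pairing `⟨W - W', h W - h W'⟩`
is the `L²` inner product `⟪Q - G, Q⟫ = ‖Q‖² - ⟪G, Q⟫`. The covariance bounds give
`σ ‖W - W'‖² ≤ ‖Q‖² ≤ ρ ‖W - W'‖²`, and Cauchy–Schwarz with the Lipschitz bound gives
`⟪G, Q⟫ ≤ τ ‖Q‖² ≤ τ ρ ‖W - W'‖²`. -/

lemma real_inner_le_mul_norm_sq_of_norm_le {H : Type*} [NormedAddCommGroup H]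
    [InnerProductSpace ℝ H] {x y : H} {τ : ℝ} (hxy : ‖x‖ ≤ τ * ‖y‖) :
    ⟪x, y⟫ ≤ τ * ‖y‖ ^ 2 :=
  calc ⟪x, y⟫ ≤ ‖x‖ * ‖y‖ := real_inner_le_norm x y
    _ ≤ τ * ‖y‖ * ‖y‖ := mul_le_mul_of_nonneg_right hxy (norm_nonneg y)
    _ = τ * ‖y‖ ^ 2 := by ring

section L2

variable {Ω E : Type*} [MeasurableSpace Ω] {μ : Measure Ω}
  [NormedAddCommGroup E] [InnerProductSpace ℝ E] [CompleteSpace E]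

lemma L2.norm_sq_eq_integral_sq {u : Lp ℝ 2 μ} {g : Ω → ℝ} (hu : u =ᵐ[μ] g) :
    ‖u‖ ^ 2 = ∫ ω, g ω ^ 2 ∂μ := by
  rw [← real_inner_self_eq_norm_sq, L2.inner_def]
  refine integral_congr_ae ?_
  filter_upwards [hu] with ω hω
  simp [hω, sq]

lemma inner_integral_smul_eq_L2_inner {X : Ω → E} (hX : MemLp X 2 μ) (f : Lp ℝ 2 μ)
    {u : Lp ℝ 2 μ} {v : E} (hu : u =ᵐ[μ] fun ω => ⟪v, X ω⟫) :
    ⟪v, ∫ ω, f ω • X ω ∂μ⟫ = ⟪f, u⟫ := by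
  have hfX : Integrable (fun ω => f ω • X ω) μ :=
    memLp_one_iff_integrable.1 (hX.smul (Lp.memLp f))
  rw [← integral_inner hfX, L2.inner_def]
  refine integral_congr_ae ?_
  filter_upwards [hu] with ω hω
  simp [real_inner_smul_right, hω, mul_comm]

end L2

theorem stmt0_general {n : ℕ} {Ω : Type*} [MeasurableSpace Ω] (μ : Measure Ω)
    (X : Ω → EuclideanSpace ℝ (Fin n)) (hXm : Measurable X)
    (hX2 : Integrable (fun ω => ‖X ω‖ ^ 2) μ)
    (σ ρ : ℝ)
    (hlow : ∀ v : EuclideanSpace ℝ (Fin n),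
      σ * ‖v‖ ^ 2 ≤ ∫ ω, (inner ℝ v (X ω) : ℝ) ^ 2 ∂μ)
    (hhigh : ∀ v : EuclideanSpace ℝ (Fin n),
      ∫ ω, (inner ℝ v (X ω) : ℝ) ^ 2 ∂μ ≤ ρ * ‖v‖ ^ 2)
    (Φ : Lp ℝ 2 μ → Lp ℝ 2 μ) (τ : ℝ) (hτ : 0 ≤ τ)
    (hLip : ∀ f g : Lp ℝ 2 μ, ‖Φ f - Φ g‖ ≤ τ * ‖f - g‖)
    (ℓ : EuclideanSpace ℝ (Fin n) → Lp ℝ 2 μ)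
    (hℓ : ∀ W, (ℓ W : Ω → ℝ) =ᵐ[μ] fun ω => (inner ℝ W (X ω) : ℝ))
    (h : EuclideanSpace ℝ (Fin n) → EuclideanSpace ℝ (Fin n))
    (hh : ∀ W, h W = ∫ ω, (((inner ℝ W (X ω) : ℝ)) - (Φ (ℓ W) : Ω → ℝ) ω) • X ω ∂μ) :
    ∀ W W' : EuclideanSpace ℝ (Fin n),
      (σ - τ * ρ) * ‖W - W'‖ ^ 2 ≤ (inner ℝ (W - W') (h W - h W') : ℝ) := by
  intro W W'
  have hX : MemLp X 2 μ := (memLp_two_iff_integrable_sq_norm hXm.aestronglyMeasurable).2 hX2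
  have hℓ_sub : ℓ W - ℓ W' = ℓ (W - W') := by
    refine Lp.ext ?_
    filter_upwards [Lp.coeFn_sub (ℓ W) (ℓ W'), hℓ W, hℓ W', hℓ (W - W')] with ω h₁ h₂ h₃ h₄
    simp only [h₁, Pi.sub_apply, h₂, h₃, h₄, inner_sub_left]
  have hh_L2 : ∀ V, h V = ∫ ω, (ℓ V - Φ (ℓ V) : Lp ℝ 2 μ) ω • X ω ∂μ := fun V => by
    rw [hh V]
    refine integral_congr_ae ?_
    filter_upwards [Lp.coeFn_sub (ℓ V) (Φ (ℓ V)), hℓ V] with ω h₁ h₂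
    simp only [h₁, Pi.sub_apply, h₂]
  have hpairing : ⟪W - W', h W - h W'⟫
      = ‖ℓ (W - W')‖ ^ 2 - ⟪Φ (ℓ W) - Φ (ℓ W'), ℓ (W - W')⟫ := by
    rw [inner_sub_right, hh_L2, hh_L2, inner_integral_smul_eq_L2_inner hX _ (hℓ _),
      inner_integral_smul_eq_L2_inner hX _ (hℓ _), ← inner_sub_left,
      show ℓ W - Φ (ℓ W) - (ℓ W' - Φ (ℓ W')) = (ℓ W - ℓ W') - (Φ (ℓ W) - Φ (ℓ W')) by abel,
      hℓ_sub, inner_sub_left, real_inner_self_eq_norm_sq]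
  have hnorm : ‖ℓ (W - W')‖ ^ 2 = ∫ ω, ⟪W - W', X ω⟫ ^ 2 ∂μ :=
    L2.norm_sq_eq_integral_sq (hℓ (W - W'))
  have hΦ : ⟪Φ (ℓ W) - Φ (ℓ W'), ℓ (W - W')⟫ ≤ τ * ‖ℓ (W - W')‖ ^ 2 :=
    real_inner_le_mul_norm_sq_of_norm_le (hℓ_sub ▸ hLip (ℓ W) (ℓ W'))
  have hτQ : τ * ‖ℓ (W - W')‖ ^ 2 ≤ τ * (ρ * ‖W - W'‖ ^ 2) :=
    mul_le_mul_of_nonneg_left (hnorm ▸ hhigh (W - W')) hτ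
  rw [hpairing]
  linarith [hnorm ▸ hlow (W - W')]

/-- Strong monotonicity of the drift `h` in the paper's online-learning lemma (Section 3.3). -/
theorem stmt0 {n : ℕ} {Ω : Type*} [MeasurableSpace Ω] (μ : Measure Ω) [IsProbabilityMeasure μ]
    (X : Ω → EuclideanSpace ℝ (Fin n)) (hXm : Measurable X)
    (hX2 : Integrable (fun ω => ‖X ω‖ ^ 2) μ)
    (σ ρ : ℝ) (hσ : 0 < σ) (hσρ : σ ≤ ρ)
    (hlow : ∀ v : EuclideanSpace ℝ (Fin n),
      σ * ‖v‖ ^ 2 ≤ ∫ ω, (inner ℝ v (X ω) : ℝ) ^ 2 ∂μ)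
    (hhigh : ∀ v : EuclideanSpace ℝ (Fin n),
      ∫ ω, (inner ℝ v (X ω) : ℝ) ^ 2 ∂μ ≤ ρ * ‖v‖ ^ 2)
    (Φ : Lp ℝ 2 μ → Lp ℝ 2 μ) (τ : ℝ) (hτ : 0 ≤ τ) (hτρ : τ * ρ < σ)
    (hLip : ∀ f g : Lp ℝ 2 μ, ‖Φ f - Φ g‖ ≤ τ * ‖f - g‖)
    (ℓ : EuclideanSpace ℝ (Fin n) → Lp ℝ 2 μ)
    (hℓ : ∀ W, (ℓ W : Ω → ℝ) =ᵐ[μ] fun ω => (inner ℝ W (X ω) : ℝ))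
    (h : EuclideanSpace ℝ (Fin n) → EuclideanSpace ℝ (Fin n))
    (hh : ∀ W, h W = ∫ ω, (((inner ℝ W (X ω) : ℝ)) - (Φ (ℓ W) : Ω → ℝ) ω) • X ω ∂μ) :
    ∀ W W' : EuclideanSpace ℝ (Fin n),
      (σ - τ * ρ) * ‖W - W'‖ ^ 2 ≤ (inner ℝ (W - W') (h W - h W') : ℝ) :=
  stmt0_general μ X hXm hX2 σ ρ hlow hhigh Φ τ hτ hLip ℓ hℓ h hh
end

section
/- Let (Ω, μ) be a probability space and S : Ω → Ω an ergodic measure-preserving map. Let φ : Ω → ℝⁿ and r : Ω → ℝ be bounded measurable functions, and let λ > 0. For ℓ ≥ 1 and ω ∈ Ω define the empirical matrix M_ℓ(ω) = (1/ℓ) Σ_{k=0}^{ℓ−1} φ(Sᵏ ω) φ(Sᵏ ω)ᵀ and empirical vector b_ℓ(ω) = (1/ℓ) Σ_{k=0}^{ℓ−1} φ(Sᵏ ω) r(Sᵏ ω), and let W_ℓ(ω) = (M_ℓ(ω) + λ I)⁻¹ b_ℓ(ω) be the unique minimizer of W ↦ (1/ℓ) Σ_{k=0}^{ℓ−1} (⟨W,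 φ(Sᵏ ω)⟩ − r(Sᵏ ω))² + λ‖W‖². Let W_∞ = (E_μ[φ φᵀ] + λ I)⁻¹ E_μ[φ r] be the unique minimizer of W ↦ E_μ[(⟨W, φ⟩ − r)²] + λ‖W‖². Then for μ-almost every ω, W_ℓ(ω) → W_∞ as ℓ → ∞. -/
/-!
The empirical moments `M_ℓ(ω)` and `b_ℓ(ω)` are Birkhoff averages of the bounded observables
`φ φᵀ` and `r φ`, so by Birkhoff's pointwise ergodic theorem they converge almost surely to
`E[φ φᵀ]` and `E[r φ]`. As a limit of Gram matrices, `E[φ φᵀ]` is positive semidefinite, so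
`E[φ φᵀ] + λ I` is invertible and `(M, b) ↦ (M + λ I)⁻¹ b` is continuous at the limit point.

Birkhoff's theorem for bounded observables comes from the maximal ergodic theorem in Garsia's
form: if almost every point has a positive Birkhoff sum of `f`, then `∫ f ≥ 0`. The limsup of
the Birkhoff averages is invariant, hence a.e. equal to a constant `c`; if `c > ∫ f`, this
applied to `f - c'` with `∫ f < c' < c` gives a contradiction.
-/

open MeasureTheory Matrix Filter Finset Topology

section Birkhoff

variable {α : Type*} {T : α → α} {f : α → ℝ}

section BirkhoffMax

def birkhoffMax (T : α → α) (f : α → ℝ) (N : ℕ) : α → ℝ :=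
  (range (N + 1)).sup' nonempty_range_add_one fun k => birkhoffSum T f k

lemma birkhoffMax_apply (N : ℕ) (x : α) :
    birkhoffMax T f N x =
      (range (N + 1)).sup' nonempty_range_add_one fun k => birkhoffSum T f k x :=
  Finset.sup'_apply _ _ _

lemma birkhoffSum_le_birkhoffMax {k N : ℕ} (hk : k ≤ N) (x : α) :
    birkhoffSum T f k x ≤ birkhoffMax T f N x := by
  rw [birkhoffMax_apply]
  exact le_sup' (fun k => birkhoffSum T f k x) (mem_range_succ_iff.2 hk)

lemma birkhoffMax_nonneg (N : ℕ) (x : α) : 0 ≤ birkhoffMax T f N x :=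
  (birkhoffSum_zero T f x).symm.trans_le (birkhoffSum_le_birkhoffMax N.zero_le x)

lemma birkhoffMax_mono (x : α) : Monotone fun N => birkhoffMax T f N x := by
  intro N N' h
  dsimp only
  rw [birkhoffMax_apply (N := N)]
  exact sup'_le _ _ fun k hk => birkhoffSum_le_birkhoffMax ((mem_range_succ_iff.1 hk).trans h) x

/-- `S_0 = 0` and `S_{k+1} x = f x + S_k (T x)`. -/
lemma birkhoffMax_le_max_zero (N : ℕ) (x : α) :
    birkhoffMax T f N x ≤ max 0 (f x + birkhoffMax T f N (T x)) := by
  rw [birkhoffMax_apply]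
  refine sup'_le _ _ fun k hk => ?_
  rcases k with _ | k
  · simp
  · rw [birkhoffSum_succ']
    exact le_max_of_le_right (add_le_add_right (birkhoffSum_le_birkhoffMax
      (Nat.le_of_succ_le (mem_range_succ_iff.1 hk)) _) _)

lemma birkhoffMax_le_birkhoffSum_abs (N : ℕ) (x : α) :
    birkhoffMax T f N x ≤ birkhoffSum T (fun y => |f y|) N x := by
  rw [birkhoffMax_apply]
  refine sup'_le _ _ fun k hk => ?_
  calc birkhoffSum T f k x ≤ birkhoffSum T (fun y => |f y|) k x :=
        sum_le_sum fun i _ => le_abs_self _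
    _ ≤ birkhoffSum T (fun y => |f y|) N x :=
        sum_le_sum_of_subset_of_nonneg (range_subset_range.2 (mem_range_succ_iff.1 hk))
          fun i _ _ => abs_nonneg _

end BirkhoffMax

section BoundedAverages

variable {C : ℝ}

lemma Filter.limsup_le_limsup_of_tendsto_sub_nhds_zero {ι : Type*} {l : Filter ι} [l.NeBot]
    {u v : ι → ℝ} (h : Tendsto (u - v) l (𝓝 0)) (hv_le : IsBoundedUnder (· ≤ ·) l v)
    (hv_ge : IsBoundedUnder (· ≥ ·) l v) : limsup u l ≤ limsup v l := by
  have := limsup_add_le h.isBoundedUnder_ge h.isBoundedUnder_le hv_ge.isCoboundedUnder_le hv_le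
  rwa [sub_add_cancel, h.limsup_eq, zero_add] at this

lemma abs_birkhoffAverage_le (hC : ∀ x, |f x| ≤ C) (n : ℕ) (x : α) :
    |birkhoffAverage ℝ T f n x| ≤ C := by
  rcases n.eq_zero_or_pos with rfl | hn
  · simpa using (abs_nonneg _).trans (hC x)
  rw [birkhoffAverage, smul_eq_mul, abs_mul, abs_inv, Nat.abs_cast,
    inv_mul_le_iff₀ (Nat.cast_pos.2 hn)]
  calc |birkhoffSum T f n x| ≤ ∑ k ∈ range n, |f (T^[k] x)| := abs_sum_le_sum_abs _ _
    _ ≤ ∑ _k ∈ range n, C := sum_le_sum fun k _ => hC _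
    _ = n * C := by simp

lemma isBoundedUnder_le_birkhoffAverage (hC : ∀ x, |f x| ≤ C) (x : α) :
    IsBoundedUnder (· ≤ ·) atTop fun n => birkhoffAverage ℝ T f n x :=
  isBoundedUnder_of ⟨C, fun n => (abs_le.1 (abs_birkhoffAverage_le hC n x)).2⟩

lemma isBoundedUnder_ge_birkhoffAverage (hC : ∀ x, |f x| ≤ C) (x : α) :
    IsBoundedUnder (· ≥ ·) atTop fun n => birkhoffAverage ℝ T f n x :=
  isBoundedUnder_of ⟨-C, fun n => (abs_le.1 (abs_birkhoffAverage_le hC n x)).1⟩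

lemma limsup_birkhoffAverage_apply (hC : ∀ x, |f x| ≤ C) (x : α) :
    limsup (fun n => birkhoffAverage ℝ T f n (T x)) atTop =
      limsup (fun n => birkhoffAverage ℝ T f n x) atTop := by
  have hbdd : Bornology.IsBounded (Set.range f) :=
    isBounded_iff_forall_norm_le.2 ⟨C, by rintro _ ⟨y, rfl⟩; exact hC y⟩
  have h := tendsto_birkhoffAverage_apply_sub_birkhoffAverage' ℝ hbdd T x
  have h' : Tendsto (fun n => birkhoffAverage ℝ T f n x - birkhoffAverage ℝ T f n (T x)) atTop
      (𝓝 0) := by simpa using h.neg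
  exact le_antisymm
    (limsup_le_limsup_of_tendsto_sub_nhds_zero h
      (isBoundedUnder_le_birkhoffAverage hC x) (isBoundedUnder_ge_birkhoffAverage hC x))
    (limsup_le_limsup_of_tendsto_sub_nhds_zero h'
      (isBoundedUnder_le_birkhoffAverage hC (T x)) (isBoundedUnder_ge_birkhoffAverage hC (T x)))

lemma exists_birkhoffSum_sub_pos_of_lt_limsup {c : ℝ} (hC : ∀ x, |f x| ≤ C) {x : α}
    (h : c < limsup (fun n => birkhoffAverage ℝ T f n x) atTop) :
    ∃ n, 0 < birkhoffSum T (fun y => f y - c) n x := by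
  obtain ⟨n, hc, hn⟩ := ((frequently_lt_of_lt_limsup
    (isBoundedUnder_ge_birkhoffAverage hC x).isCoboundedUnder_le h).and_eventually
    (eventually_gt_atTop 0)).exists
  refine ⟨n, ?_⟩
  rw [birkhoffAverage, smul_eq_mul, lt_inv_mul_iff₀ (Nat.cast_pos.2 hn)] at hc
  simpa [birkhoffSum, sum_sub_distrib] using hc

end BoundedAverages

section MaximalErgodic

variable [MeasurableSpace α] {μ : Measure α}

lemma measurable_birkhoffSum (hT : Measurable T) (hf : Measurable f) (n : ℕ) :
    Measurable (birkhoffSum T f n) :=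
  Finset.measurable_sum _ fun k _ => hf.comp (hT.iterate k)

lemma measurable_birkhoffAverage (hT : Measurable T) (hf : Measurable f) (n : ℕ) :
    Measurable (birkhoffAverage ℝ T f n) :=
  (measurable_birkhoffSum hT hf n).const_smul ((n : ℝ)⁻¹)

lemma measurable_birkhoffMax (hT : Measurable T) (hf : Measurable f) (N : ℕ) :
    Measurable (birkhoffMax T f N) :=
  Finset.measurable_range_sup' fun k _ => measurable_birkhoffSum hT hf k

lemma integrable_birkhoffSum (hT : MeasurePreserving T μ μ) (hf : Integrable f μ) (n : ℕ) :
    Integrable (birkhoffSum T f n) μ :=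
  integrable_finsetSum _ fun k _ => (hT.iterate k).integrable_comp_of_integrable hf

lemma integrable_birkhoffMax (hT : MeasurePreserving T μ μ) (hfm : Measurable f)
    (hf : Integrable f μ) (N : ℕ) : Integrable (birkhoffMax T f N) μ :=
  (integrable_birkhoffSum hT hf.abs N).mono'
    (measurable_birkhoffMax hT.measurable hfm N).aestronglyMeasurable
    (Eventually.of_forall fun x => by
      rw [Real.norm_of_nonneg (birkhoffMax_nonneg N x)]
      exact birkhoffMax_le_birkhoffSum_abs N x)

lemma MeasureTheory.MeasurePreserving.integral_comp_of_aestronglyMeasurable {β E : Type*}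
    [MeasurableSpace β] [NormedAddCommGroup E] [NormedSpace ℝ E] {ν : Measure β} {F : α → β}
    (hF : MeasurePreserving F μ ν) {g : β → E} (hg : AEStronglyMeasurable g ν) :
    ∫ x, g (F x) ∂μ = ∫ y, g y ∂ν := by
  rw [← hF.map_eq] at hg ⊢
  exact (integral_map hF.measurable.aemeasurable hg).symm

/-- On `{M_N > 0}` one has `M_N - M_N ∘ T ≤ f`, while `∫ M_N ∘ T = ∫ M_N` and `M_N = 0` off
this set. -/
theorem setIntegral_birkhoffMax_pos_nonneg (hT : MeasurePreserving T μ μ) (hfm : Measurable f)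
    (hf : Integrable f μ) (N : ℕ) :
    0 ≤ ∫ x in {x | 0 < birkhoffMax T f N x}, f x ∂μ := by
  set E := {x | 0 < birkhoffMax T f N x}
  set p := birkhoffMax T f N
  have hpm : Measurable p := measurable_birkhoffMax hT.measurable hfm N
  have hE : MeasurableSet E := measurableSet_lt measurable_const hpm
  have hp : Integrable p μ := integrable_birkhoffMax hT hfm hf N
  have hpT : Integrable (p ∘ T) μ := hT.integrable_comp_of_integrable hp
  have hpE : ∫ x in E, p x ∂μ = ∫ x, p x ∂μ :=
    setIntegral_eq_integral_of_forall_compl_eq_zero fun x hx =>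
      le_antisymm (not_lt.1 hx) (birkhoffMax_nonneg N x)
  have hpTE : ∫ x in E, p (T x) ∂μ ≤ ∫ x, p x ∂μ :=
    (setIntegral_le_integral hpT (Eventually.of_forall fun x => birkhoffMax_nonneg N (T x))).trans_eq
      (hT.integral_comp_of_aestronglyMeasurable hpm.aestronglyMeasurable)
  have hpoint : ∀ x ∈ E, p x - p (T x) ≤ f x := fun x hx => by
    have := (le_max_iff.1 (birkhoffMax_le_max_zero N x)).resolve_left (not_le.2 hx)
    linarith
  calc 0 ≤ ∫ x in E, p x ∂μ - ∫ x in E, p (T x) ∂μ := by linarith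
    _ = ∫ x in E, (p x - p (T x)) ∂μ := (integral_sub hp.integrableOn hpT.integrableOn).symm
    _ ≤ ∫ x in E, f x ∂μ := setIntegral_mono_on (hp.sub hpT).integrableOn hf.integrableOn hE hpoint

/-- A form of the maximal ergodic theorem. -/
theorem integral_nonneg_of_ae_exists_birkhoffSum_pos (hT : MeasurePreserving T μ μ)
    (hfm : Measurable f) (hf : Integrable f μ) (hpos : ∀ᵐ x ∂μ, ∃ n, 0 < birkhoffSum T f n x) :
    0 ≤ ∫ x, f x ∂μ := by
  set E : ℕ → Set α := fun N => {x | 0 < birkhoffMax T f N x}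
  have hE N : MeasurableSet (E N) :=
    measurableSet_lt measurable_const (measurable_birkhoffMax hT.measurable hfm N)
  have hmono : Monotone E := fun N N' h x hx => hx.trans_le (birkhoffMax_mono x h)
  have hfull : (⋃ N, E N) =ᵐ[μ] (Set.univ : Set α) :=
    eventuallyEq_univ.2 <| hpos.mono fun x ⟨n, hn⟩ =>
      Set.mem_iUnion.2 ⟨n, hn.trans_le (birkhoffSum_le_birkhoffMax le_rfl x)⟩
  have hlim := tendsto_setIntegral_of_monotone hE hmono hf.integrableOn
  rw [Measure.restrict_congr_set hfull, Measure.restrict_univ] at hlim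
  exact ge_of_tendsto' hlim fun N => setIntegral_birkhoffMax_pos_nonneg hT hfm hf N

end MaximalErgodic

section PointwiseErgodic

variable [MeasurableSpace α] {μ : Measure α} [IsProbabilityMeasure μ] {C : ℝ}

theorem ae_limsup_birkhoffAverage_le (hT : Ergodic T μ) (hfm : Measurable f)
    (hC : ∀ x, |f x| ≤ C) :
    ∀ᵐ x ∂μ, limsup (fun n => birkhoffAverage ℝ T f n x) atTop ≤ ∫ x, f x ∂μ := by
  have hLm : Measurable fun x => limsup (fun n => birkhoffAverage ℝ T f n x) atTop :=
    Measurable.limsup fun n => measurable_birkhoffAverage hT.measurable hfm n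
  obtain ⟨c, hc⟩ := hT.toPreErgodic.ae_eq_const_of_ae_eq_comp hLm
    (funext (limsup_birkhoffAverage_apply hC))
  suffices c ≤ ∫ x, f x ∂μ from hc.mono fun x hx => hx.trans_le this
  by_contra! hlt
  obtain ⟨c', hfc', hc'c⟩ := exists_between hlt
  have hf : Integrable f μ :=
    Integrable.of_bound hfm.aestronglyMeasurable C (Eventually.of_forall hC)
  have := integral_nonneg_of_ae_exists_birkhoffSum_pos hT.toMeasurePreserving
    (hfm.sub_const c') (hf.sub (integrable_const c'))
    (hc.mono fun x hx => exists_birkhoffSum_sub_pos_of_lt_limsup hC (hc'c.trans_eq hx.symm))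
  rw [integral_sub hf (integrable_const c'), integral_const] at this
  simp only [probReal_univ, smul_eq_mul, one_mul, sub_nonneg] at this
  exact not_lt.2 this hfc'

/-- **Birkhoff's pointwise ergodic theorem**, for bounded observables. -/
theorem ae_tendsto_birkhoffAverage (hT : Ergodic T μ) (hfm : Measurable f)
    (hC : ∀ x, |f x| ≤ C) :
    ∀ᵐ x ∂μ, Tendsto (fun n => birkhoffAverage ℝ T f n x) atTop (𝓝 (∫ x, f x ∂μ)) := by
  have hC' : ∀ x, |(-f) x| ≤ C := fun x => (abs_neg (f x)).trans_le (hC x)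
  filter_upwards [ae_limsup_birkhoffAverage_le hT hfm hC,
    ae_limsup_birkhoffAverage_le hT hfm.neg hC'] with x hsup hinf
  rw [integral_neg'] at hinf
  refine tendsto_order.2 ⟨fun a ha => ?_, fun b hb =>
    eventually_lt_of_limsup_lt (hsup.trans_lt hb) (isBoundedUnder_le_birkhoffAverage hC x)⟩
  exact (eventually_lt_of_limsup_lt (hinf.trans_lt (neg_lt_neg ha))
    (isBoundedUnder_le_birkhoffAverage hC' x)).mono fun n hn =>
      neg_lt_neg_iff.1 (by simpa [birkhoffAverage_neg] using hn)

end PointwiseErgodic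

lemma ae_tendsto_birkhoffAverage_pi [MeasurableSpace α] {μ : Measure α} {ι : Type*} [Countable ι]
    {E : ι → Type*} [∀ i, AddCommMonoid (E i)] [∀ i, Module ℝ (E i)]
    [∀ i, TopologicalSpace (E i)] {g : α → ∀ i, E i} {c : ∀ i, E i}
    (h : ∀ i, ∀ᵐ x ∂μ, Tendsto (fun n => birkhoffAverage ℝ T (fun y => g y i) n x) atTop
      (𝓝 (c i))) :
    ∀ᵐ x ∂μ, Tendsto (fun n => birkhoffAverage ℝ T g n x) atTop (𝓝 c) := by
  filter_upwards [ae_all_iff.2 h] with x hx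
  refine tendsto_pi_nhds.2 fun i => ?_
  simpa [birkhoffAverage, birkhoffSum, Finset.sum_apply] using hx i

end Birkhoff

namespace Matrix

variable {n ι : Type*} [Fintype n] {l : Filter ι}

lemma PosSemidef.of_tendsto [l.NeBot] {A : ι → Matrix n n ℝ} {A₀ : Matrix n n ℝ}
    (hA : ∀ᶠ i in l, (A i).PosSemidef) (h : Tendsto A l (𝓝 A₀)) : A₀.PosSemidef := by
  refine posSemidef_iff_dotProduct_mulVec.2 ⟨?_, fun x => ?_⟩
  · refine tendsto_nhds_unique ?_ h
    exact ((continuous_id.matrix_conjTranspose.tendsto A₀).comp h).congr'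
      (hA.mono fun i hi => hi.isHermitian.eq)
  · exact ge_of_tendsto (((continuous_const.dotProduct
      (continuous_id.matrix_mulVec continuous_const)).tendsto A₀).comp h)
      (hA.mono fun i hi => hi.dotProduct_mulVec_nonneg x)

variable [DecidableEq n]

lemma _root_.Filter.Tendsto.inv_mulVec {A : ι → Matrix n n ℝ} {b : ι → n → ℝ}
    {A₀ : Matrix n n ℝ} {b₀ : n → ℝ} (hA : Tendsto A l (𝓝 A₀)) (hb : Tendsto b l (𝓝 b₀))
    (hdet : A₀.det ≠ 0) : Tendsto (fun i => (A i)⁻¹ *ᵥ b i) l (𝓝 (A₀⁻¹ *ᵥ b₀)) := by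
  have hinv : ContinuousAt Inv.inv A₀ := continuousAt_matrix_inv A₀ <| by
    rw [Ring.inverse_eq_inv']
    exact continuousAt_inv₀ hdet
  exact ((continuous_fst.matrix_mulVec continuous_snd).tendsto _).comp
    ((hinv.tendsto.comp hA).prodMk_nhds hb)

theorem tendsto_inv_add_smul_one_mulVec [l.NeBot] {A : ι → Matrix n n ℝ} {b : ι → n → ℝ}
    {A₀ : Matrix n n ℝ} {b₀ : n → ℝ} {c : ℝ} (hA_psd : ∀ᶠ i in l, (A i).PosSemidef)
    (hA : Tendsto A l (𝓝 A₀)) (hb : Tendsto b l (𝓝 b₀)) (hc : 0 < c) :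
    Tendsto (fun i => (A i + c • 1)⁻¹ *ᵥ b i) l (𝓝 ((A₀ + c • 1)⁻¹ *ᵥ b₀)) := by
  have hpd : (A₀ + c • 1).PosDef :=
    PosDef.posSemidef_add (PosSemidef.of_tendsto hA_psd hA) (PosDef.one.smul hc)
  exact (hA.add_const _).inv_mulVec hb hpd.det_pos.ne'

end Matrix

theorem stmt7_general {n : ℕ} {Ω : Type*} [MeasurableSpace Ω] (μ : Measure Ω) [IsProbabilityMeasure μ]
    (S : Ω → Ω) (hS : Ergodic S μ)
    (φ : Ω → Fin n → ℝ) (r : Ω → ℝ)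
    (hφm : Measurable φ) (hrm : Measurable r)
    (hbdd : ∃ M : ℝ, ∀ ω, (∀ i, |φ ω i| ≤ M) ∧ |r ω| ≤ M)
    (lam : ℝ) (hlam : 0 < lam)
    (Ml : ℕ → Ω → Matrix (Fin n) (Fin n) ℝ)
    (hMl : ∀ (l : ℕ) (ω : Ω), Ml l ω =
      (l : ℝ)⁻¹ • ∑ k ∈ Finset.range l, vecMulVec (φ (S^[k] ω)) (φ (S^[k] ω)))
    (bl : ℕ → Ω → Fin n → ℝ)
    (hbl : ∀ (l : ℕ) (ω : Ω), bl l ω =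
      (l : ℝ)⁻¹ • ∑ k ∈ Finset.range l, r (S^[k] ω) • φ (S^[k] ω))
    (Wl : ℕ → Ω → Fin n → ℝ)
    (hWl : ∀ (l : ℕ) (ω : Ω), Wl l ω =
      (Ml l ω + lam • (1 : Matrix (Fin n) (Fin n) ℝ))⁻¹.mulVec (bl l ω))
    (Minf : Matrix (Fin n) (Fin n) ℝ)
    (hMinf : ∀ i j, Minf i j = ∫ ω, φ ω i * φ ω j ∂μ)
    (binf : Fin n → ℝ) (hbinf : ∀ i, binf i = ∫ ω, φ ω i * r ω ∂μ)
    (Winf : Fin n → ℝ)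
    (hWinf : Winf = (Minf + lam • (1 : Matrix (Fin n) (Fin n) ℝ))⁻¹.mulVec binf) :
    ∀ᵐ ω ∂μ, Tendsto (fun l : ℕ => Wl l ω) atTop (nhds Winf) := by
  obtain ⟨M, hM⟩ := hbdd
  have hφ i : Measurable fun ω => φ ω i := (measurable_pi_apply i).comp hφm
  have hprod {f g : Ω → ℝ} (hf : ∀ ω, |f ω| ≤ M) (hg : ∀ ω, |g ω| ≤ M) (ω : Ω) :
      |f ω * g ω| ≤ M * M :=
    (abs_mul _ _).trans_le (mul_le_mul (hf ω) (hg ω) (abs_nonneg _) ((abs_nonneg _).trans (hf ω)))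
  have hMl_lim : ∀ᵐ ω ∂μ, Tendsto (fun l => Ml l ω) atTop (𝓝 Minf) := by
    simp only [hMl]
    refine ae_tendsto_birkhoffAverage_pi (T := S) (g := fun ω => vecMulVec (φ ω) (φ ω)) fun i =>
      ae_tendsto_birkhoffAverage_pi fun j => ?_
    rw [hMinf]
    exact ae_tendsto_birkhoffAverage (f := fun ω => φ ω i * φ ω j) hS ((hφ i).mul (hφ j))
      (hprod (fun ω => (hM ω).1 i) fun ω => (hM ω).1 j)
  have hbl_lim : ∀ᵐ ω ∂μ, Tendsto (fun l => bl l ω) atTop (𝓝 binf) := by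
    simp only [hbl]
    refine ae_tendsto_birkhoffAverage_pi (T := S) (g := fun ω => r ω • φ ω) fun i => ?_
    simp_rw [hbinf, mul_comm (φ _ i)]
    exact ae_tendsto_birkhoffAverage (f := fun ω => r ω * φ ω i) hS (hrm.mul (hφ i))
      (hprod (fun ω => (hM ω).2) fun ω => (hM ω).1 i)
  have hMl_psd l ω : (Ml l ω).PosSemidef := by
    rw [hMl]
    exact (posSemidef_sum _ fun k _ => posSemidef_vecMulVec_self_star _).smul
      (inv_nonneg.2 (Nat.cast_nonneg l))
  filter_upwards [hMl_lim, hbl_lim] with ω hMω hbω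
  simp only [hWl, hWinf]
  exact tendsto_inv_add_smul_one_mulVec (Eventually.of_forall fun l => hMl_psd l ω) hMω hbω hlam

/-- Almost-sure consistency of the empirical ridge-regression minimiser along an ergodic
trajectory: the empirical regularised least-squares solution `W_ℓ(ω)` converges
`μ`-almost surely to the population solution `W_∞` (central step in the proofs of
Theorems 2 and 3 of the paper). -/
theorem stmt7 {n : ℕ} {Ω : Type*} [MeasurableSpace Ω] (μ : Measure Ω) [IsProbabilityMeasure μ]
    (S : Ω → Ω) (hS : Ergodic S μ)
    (φ : Ω → Fin n → ℝ) (r : Ω → ℝ)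
    (hφm : Measurable φ) (hrm : Measurable r)
    (hbdd : ∃ M : ℝ, ∀ ω, (∀ i, |φ ω i| ≤ M) ∧ |r ω| ≤ M)
    (lam : ℝ) (hlam : 0 < lam)
    (Ml : ℕ → Ω → Matrix (Fin n) (Fin n) ℝ)
    (hMl : ∀ (l : ℕ) (ω : Ω), Ml l ω =
      (l : ℝ)⁻¹ • ∑ k ∈ Finset.range l, vecMulVec (φ (S^[k] ω)) (φ (S^[k] ω)))
    (bl : ℕ → Ω → Fin n → ℝ)
    (hbl : ∀ (l : ℕ) (ω : Ω), bl l ω =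
      (l : ℝ)⁻¹ • ∑ k ∈ Finset.range l, r (S^[k] ω) • φ (S^[k] ω))
    (Wl : ℕ → Ω → Fin n → ℝ)
    (hWl : ∀ (l : ℕ) (ω : Ω), Wl l ω =
      (Ml l ω + lam • (1 : Matrix (Fin n) (Fin n) ℝ))⁻¹.mulVec (bl l ω))
    (hWlmin : ∀ (l : ℕ) (ω : Ω), 1 ≤ l → ∀ W : Fin n → ℝ, W ≠ Wl l ω →
      ((l : ℝ)⁻¹ * ∑ k ∈ Finset.range l,
          ((∑ i, Wl l ω i * φ (S^[k] ω) i) - r (S^[k] ω)) ^ 2) + lam * ∑ j, Wl l ω j ^ 2 <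
      ((l : ℝ)⁻¹ * ∑ k ∈ Finset.range l,
          ((∑ i, W i * φ (S^[k] ω) i) - r (S^[k] ω)) ^ 2) + lam * ∑ j, W j ^ 2)
    (Minf : Matrix (Fin n) (Fin n) ℝ)
    (hMinf : ∀ i j, Minf i j = ∫ ω, φ ω i * φ ω j ∂μ)
    (binf : Fin n → ℝ) (hbinf : ∀ i, binf i = ∫ ω, φ ω i * r ω ∂μ)
    (Winf : Fin n → ℝ)
    (hWinf : Winf = (Minf + lam • (1 : Matrix (Fin n) (Fin n) ℝ))⁻¹.mulVec binf)
    (hWinfmin : ∀ W : Fin n → ℝ, W ≠ Winf →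
      (∫ ω, ((∑ i, Winf i * φ ω i) - r ω) ^ 2 ∂μ) + lam * ∑ j, Winf j ^ 2 <
      (∫ ω, ((∑ i, W i * φ ω i) - r ω) ^ 2 ∂μ) + lam * ∑ j, W j ^ 2) :
    ∀ᵐ ω ∂μ, Tendsto (fun l : ℕ => Wl l ω) atTop (nhds Winf) :=
  stmt7_general μ S hS φ r hφm hrm hbdd lam hlam Ml hMl bl hbl Wl hWl Minf hMinf binf hbinf Winf
    hWinf
end

section
/- Let A be a real n × n matrix with operator 2-norm ‖A‖ < 1, C a real n × d matrix, ζ ∈ ℝⁿ, and let σ : ℝⁿ → ℝⁿ be the componentwise ReLU map. Let z = (z_k)_{k ∈ ℤ} be a bi-infinite input sequence in ℝᵈ that is bounded, i.e. there exists M with ‖z_k‖ ≤ M for all k ∈ ℤ. Then there exists exactly one bounded bi-infinite sequence x = (x_k)_{k ∈ ℤ} in ℝⁿ satisfying x_{k+1} = σ(A x_k + C z_k + ζ) for all k ∈ ℤ. (That is, the ESN has the Echo State Property on bounded inputs.) -/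
/-!
A bounded state sequence is a fixed point of the one-step-shift operator
`(T x)ₖ = σ(A xₖ₋₁ + C zₖ₋₁ + ζ)` on the Banach space of bounded sequences `ℤ →ᵇ ℝⁿ`.
ReLU is `1`-Lipschitz and vanishes at `0`, so `T` maps bounded sequences to bounded ones
(because `z` is bounded) and is a contraction with constant `‖A‖ < 1`; the Banach fixed point
theorem gives existence and uniqueness.
-/

open NNReal Function BoundedContinuousFunction

section BoundedOrbit

variable {E : Type*} [NormedAddCommGroup E] {F : ℤ → E → E} {K : ℝ≥0} {B : ℝ}

lemma norm_apply_le_of_lipschitzWith (hF : ∀ k, LipschitzWith K (F k))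
    (hB : ∀ k, ‖F k 0‖ ≤ B) (k : ℤ) (x : E) : ‖F k x‖ ≤ K * ‖x‖ + B := by
  calc ‖F k x‖ ≤ ‖F k x - F k 0‖ + ‖F k 0‖ := norm_le_norm_sub_add _ _
    _ ≤ K * ‖x‖ + B := by
      gcongr
      · simpa using (hF k).norm_sub_le x 0
      · exact hB k

noncomputable def shiftStep (hF : ∀ k, LipschitzWith K (F k)) (hB : ∀ k, ‖F k 0‖ ≤ B)
    (x : ℤ →ᵇ E) : ℤ →ᵇ E :=
  BoundedContinuousFunction.ofNormedAddCommGroup (fun k => F (k - 1) (x (k - 1)))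
    continuous_of_discreteTopology (K * ‖x‖ + B) fun k =>
      (norm_apply_le_of_lipschitzWith hF hB _ _).trans
        (by gcongr; exact x.norm_coe_le_norm _)

lemma shiftStep_apply (hF : ∀ k, LipschitzWith K (F k)) (hB : ∀ k, ‖F k 0‖ ≤ B)
    (x : ℤ →ᵇ E) (k : ℤ) : shiftStep hF hB x k = F (k - 1) (x (k - 1)) :=
  rfl

lemma lipschitzWith_shiftStep (hF : ∀ k, LipschitzWith K (F k)) (hB : ∀ k, ‖F k 0‖ ≤ B) :
    LipschitzWith K (shiftStep hF hB) := by
  refine LipschitzWith.of_dist_le_mul fun x y => ?_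
  refine (BoundedContinuousFunction.dist_le (by positivity)).2 fun k => ?_
  rw [shiftStep_apply, shiftStep_apply]
  exact ((hF _).dist_le_mul _ _).trans (by gcongr; exact x.dist_coe_le_dist _)

lemma isFixedPt_shiftStep_iff (hF : ∀ k, LipschitzWith K (F k)) (hB : ∀ k, ‖F k 0‖ ≤ B)
    (x : ℤ →ᵇ E) :
    IsFixedPt (shiftStep hF hB) x ↔ ∀ k, x (k + 1) = F k (x k) := by
  rw [IsFixedPt, BoundedContinuousFunction.ext_iff]
  constructor
  · intro h k
    simpa [shiftStep_apply] using (h (k + 1)).symm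
  · intro h k
    simpa [shiftStep_apply] using (h (k - 1)).symm

theorem existsUnique_bounded_orbit [CompleteSpace E] (hF : ∀ k, LipschitzWith K (F k))
    (hB : ∀ k, ‖F k 0‖ ≤ B) (hK : K < 1) :
    ∃! x : ℤ → E, (∃ M : ℝ, ∀ k, ‖x k‖ ≤ M) ∧ ∀ k, x (k + 1) = F k (x k) := by
  have hT : ContractingWith K (shiftStep hF hB) := ⟨hK, lipschitzWith_shiftStep hF hB⟩
  set x := hT.fixedPoint
  refine ⟨x, ⟨⟨‖x‖, x.norm_coe_le_norm⟩, (isFixedPt_shiftStep_iff hF hB x).1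
    hT.fixedPoint_isFixedPt⟩, ?_⟩
  rintro y ⟨⟨M, hM⟩, hy⟩
  let y' : ℤ →ᵇ E :=
    BoundedContinuousFunction.ofNormedAddCommGroup y continuous_of_discreteTopology M hM
  have hy' : y' = x := hT.fixedPoint_unique ((isFixedPt_shiftStep_iff hF hB y').2 hy)
  exact congrArg DFunLike.coe hy'

end BoundedOrbit

lemma EuclideanSpace.relu_zero {ι : Type*} {f : EuclideanSpace ℝ ι → EuclideanSpace ℝ ι}
    (hf : ∀ x i, f x i = max 0 (x i)) : f 0 = 0 := by
  ext i
  simp [hf]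

section Coordinatewise

variable {ι : Type*} [Fintype ι] {f : EuclideanSpace ℝ ι → EuclideanSpace ℝ ι} {φ : ℝ → ℝ}
  {K : ℝ≥0}

lemma EuclideanSpace.lipschitzWith_of_apply_eq (hφ : LipschitzWith K φ)
    (hf : ∀ x i, f x i = φ (x i)) : LipschitzWith K f := by
  refine LipschitzWith.of_dist_le_mul fun x y => ?_
  rw [EuclideanSpace.dist_eq, EuclideanSpace.dist_eq, ← Real.sqrt_sq K.coe_nonneg,
    ← Real.sqrt_mul (sq_nonneg _), Finset.mul_sum]
  gcongr with i
  rw [hf, hf, ← mul_pow]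
  gcongr
  exact hφ.dist_le_mul _ _

lemma EuclideanSpace.lipschitzWith_relu (hf : ∀ x i, f x i = max 0 (x i)) :
    LipschitzWith 1 f :=
  EuclideanSpace.lipschitzWith_of_apply_eq (LipschitzWith.id.const_max 0) hf

end Coordinatewise

/-- The Echo State Property: if `‖A‖ < 1` then for every bounded bi-infinite input
sequence `z` there is exactly one bounded bi-infinite reservoir-state sequence `x`
satisfying `x_{k+1} = σ(A x_k + C z_k + ζ)` for all `k ∈ ℤ`. -/
theorem stmt9 {n d : ℕ}
    (A : EuclideanSpace ℝ (Fin n) →L[ℝ] EuclideanSpace ℝ (Fin n)) (hA : ‖A‖ < 1)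
    (C : EuclideanSpace ℝ (Fin d) →L[ℝ] EuclideanSpace ℝ (Fin n))
    (ζ : EuclideanSpace ℝ (Fin n))
    (relu : EuclideanSpace ℝ (Fin n) → EuclideanSpace ℝ (Fin n))
    (hrelu : ∀ (x : EuclideanSpace ℝ (Fin n)) (i : Fin n), relu x i = max 0 (x i))
    (z : ℤ → EuclideanSpace ℝ (Fin d)) (hz : ∃ M : ℝ, ∀ k : ℤ, ‖z k‖ ≤ M) :
    ∃! x : ℤ → EuclideanSpace ℝ (Fin n),
      (∃ M : ℝ, ∀ k : ℤ, ‖x k‖ ≤ M) ∧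
      (∀ k : ℤ, x (k + 1) = relu (A (x k) + C (z k) + ζ)) := by
  obtain ⟨M, hM⟩ := hz
  have hσ := EuclideanSpace.lipschitzWith_relu hrelu
  have hF : ∀ k, LipschitzWith ‖A‖₊ fun x => relu (A x + C (z k) + ζ) := fun k => by
    have h := hσ.comp ((A.lipschitz.add (LipschitzWith.const (C (z k)))).add
      (LipschitzWith.const ζ))
    rwa [one_mul, add_zero, add_zero] at h
  have hB : ∀ k, ‖relu (A 0 + C (z k) + ζ)‖ ≤ ‖C‖ * M + ‖ζ‖ := fun k =>
    calc ‖relu (A 0 + C (z k) + ζ)‖ ≤ ‖C (z k) + ζ‖ := by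
          simpa using hσ.norm_le_mul (EuclideanSpace.relu_zero hrelu) (C (z k) + ζ)
      _ ≤ ‖C (z k)‖ + ‖ζ‖ := norm_add_le _ _
      _ ≤ ‖C‖ * M + ‖ζ‖ := by gcongr; exact C.le_of_opNorm_le_of_le le_rfl (hM k)
  exact existsUnique_bounded_orbit hF hB (by exact_mod_cast hA)
end

section
/- Fix constants c > 0, ε > 0, ω ∈ ℝ, and γ ∈ (0, 1), and define F : ℝ × ℝ × (−c, c) → ℝ by F(t, y, v) = γᵗ ( −ε log(cos(π v / (2c))) − cos(ω t) sin(2π y) − 1 ), where γᵗ = exp(t log γ). Let y : ℝ → ℝ be twice continuously differentiable with |y'(t)| < c for all t. Then y satisfies the Euler–Lagrange equation d/dt [ ∂F/∂v (t, y(t), y'(t)) ] − ∂F/∂y (t, y(t), y'(t)) = 0 for all t if and only if for all t: (π ε / (2c)) ( log(γ) · tan(π y'(t) / (2c)) + (π y''(t) / (2c)) · sec²(π y'(t) / (2c)) ) + 2π cos(ω t) cos(2π y(t)) = 0. -/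
/-!
The Euler–Lagrange expression of `F` along `y` is `γᵗ` times the left-hand side of the ODE:
`∂F/∂v = γᵗ (πε/(2c)) tan(πy'/(2c))`, whose time derivative produces the `log γ · tan` and
`sec²` terms, while `−∂F/∂y = γᵗ · 2π cos(ωt) cos(2πy)`. As `γᵗ ≠ 0`, the two equations are
equivalent. The bound `|y'| < c` keeps `cos(πy'/(2c))` positive, so the logarithm and the
tangent are differentiable along the trajectory.
-/

open Real

noncomputable section

namespace BeeWorld

variable (c ε ω γ : ℝ)

def cost (t y v : ℝ) : ℝ :=
  exp (t * log γ) * (-ε * log (cos (π * v / (2 * c))) - cos (ω * t) * sin (2 * π * y) - 1)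

def eulerLagrange (y : ℝ → ℝ) (t : ℝ) : ℝ :=
  deriv (fun s => deriv (fun v => cost c ε ω γ s (y s) v) (deriv y s)) t
    - deriv (fun u => cost c ε ω γ t u (deriv y t)) (y t)

variable {c ε ω γ}

theorem cos_pi_mul_div_pos (hc : 0 < c) {w : ℝ} (hw : |w| < c) : 0 < cos (π * w / (2 * c)) := by
  apply cos_pos_of_mem_Ioo
  have hc2 : 0 < 2 * c := by linarith
  have habs : |π * w / (2 * c)| < π / 2 := by
    rw [abs_div, abs_mul, abs_of_pos pi_pos, abs_of_pos hc2,
      div_lt_div_iff₀ hc2 two_pos]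
    nlinarith [pi_pos]
  exact abs_lt.mp habs

theorem hasDerivAt_pi_mul_div {g : ℝ → ℝ} {g' s : ℝ} (hg : HasDerivAt g g' s) :
    HasDerivAt (fun s => π * g s / (2 * c)) (π * g' / (2 * c)) s := by
  simpa only [mul_div_assoc] using (hg.const_mul π).div_const (2 * c)

theorem hasDerivAt_cost_velocity (t a : ℝ) {w : ℝ} (hw : cos (π * w / (2 * c)) ≠ 0) :
    HasDerivAt (fun v => cost c ε ω γ t a v)
      (exp (t * log γ) * (π * ε / (2 * c) * tan (π * w / (2 * c)))) w := by
  have hlog := ((hasDerivAt_pi_mul_div (hasDerivAt_id' w)).cos).log hw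
  refine ((((hlog.const_mul (-ε)).sub_const (cos (ω * t) * sin (2 * π * a))).sub_const 1).const_mul
    (exp (t * log γ))).congr_deriv ?_
  rw [tan_eq_sin_div_cos]
  field_simp

theorem hasDerivAt_cost_position (t v u : ℝ) :
    HasDerivAt (fun u => cost c ε ω γ t u v)
      (-(exp (t * log γ) * (2 * π * cos (ω * t) * cos (2 * π * u)))) u := by
  have hsin := ((hasDerivAt_id' u).const_mul (2 * π)).sin
  refine ((((hsin.const_mul (cos (ω * t))).const_sub
    (-ε * log (cos (π * v / (2 * c))))).sub_const 1).const_mul (exp (t * log γ))).congr_deriv ?_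
  ring

theorem eulerLagrange_eq (hc : 0 < c) {y : ℝ → ℝ} (hdy : Differentiable ℝ (deriv y))
    (hy' : ∀ t, |deriv y t| < c) (t : ℝ) :
    eulerLagrange c ε ω γ y t = exp (t * log γ) *
      ((π * ε / (2 * c)) *
          (log γ * tan (π * deriv y t / (2 * c))
            + (π * deriv (deriv y) t / (2 * c)) * (1 / cos (π * deriv y t / (2 * c))) ^ 2)
        + 2 * π * cos (ω * t) * cos (2 * π * y t)) := by
  have hcos : ∀ s, cos (π * deriv y s / (2 * c)) ≠ 0 :=
    fun s => (cos_pi_mul_div_pos hc (hy' s)).ne'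
  have hpartialVelocity : (fun s => deriv (fun v => cost c ε ω γ s (y s) v) (deriv y s)) =
      fun s => exp (s * log γ) * (π * ε / (2 * c) * tan (π * deriv y s / (2 * c))) :=
    funext fun s => (hasDerivAt_cost_velocity s (y s) (hcos s)).deriv
  have hexp : HasDerivAt (fun s => exp (s * log γ)) (exp (t * log γ) * log γ) t := by
    simpa using ((hasDerivAt_id t).mul_const (log γ)).exp
  have htan : HasDerivAt (fun s => tan (π * deriv y s / (2 * c)))
      (1 / cos (π * deriv y t / (2 * c)) ^ 2 * (π * deriv (deriv y) t / (2 * c))) t := by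
    have hinner := hasDerivAt_pi_mul_div (c := c) (hdy t).hasDerivAt
    exact (hasDerivAt_tan (hcos t)).comp t hinner
  have hpartialVelocity_hasDerivAt : HasDerivAt
      (fun s => exp (s * log γ) * (π * ε / (2 * c) * tan (π * deriv y s / (2 * c))))
      (exp (t * log γ) * log γ * (π * ε / (2 * c) * tan (π * deriv y t / (2 * c)))
        + exp (t * log γ) * (π * ε / (2 * c) *
          (1 / cos (π * deriv y t / (2 * c)) ^ 2 * (π * deriv (deriv y) t / (2 * c))))) t :=
    hexp.mul (htan.const_mul _)
  rw [eulerLagrange, hpartialVelocity, hpartialVelocity_hasDerivAt.deriv,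
    (hasDerivAt_cost_position t (deriv y t) (y t)).deriv]
  ring

end BeeWorld

end

theorem stmt10_general (c ε ω γ : ℝ) (hc : 0 < c)
    (F : ℝ → ℝ → ℝ → ℝ)
    (hF : ∀ t y v, F t y v = Real.exp (t * Real.log γ) *
      (-ε * Real.log (Real.cos (π * v / (2 * c)))
        - Real.cos (ω * t) * Real.sin (2 * π * y) - 1))
    (y : ℝ → ℝ) (hy : ContDiff ℝ 2 y) (hy' : ∀ t, |deriv y t| < c) :
    (∀ t : ℝ,
        deriv (fun s => deriv (fun v => F s (y s) v) (deriv y s)) t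
          - deriv (fun u => F t u (deriv y t)) (y t) = 0) ↔
    (∀ t : ℝ,
        (π * ε / (2 * c)) *
            (Real.log γ * Real.tan (π * deriv y t / (2 * c))
              + (π * deriv (deriv y) t / (2 * c)) *
                  (1 / Real.cos (π * deriv y t / (2 * c))) ^ 2)
          + 2 * π * Real.cos (ω * t) * Real.cos (2 * π * y t) = 0) := by
  obtain rfl : F = BeeWorld.cost c ε ω γ := funext₃ hF
  have hdy : Differentiable ℝ (deriv y) := (hy.deriv' (n := 1)).differentiable one_ne_zero
  refine forall_congr' fun t => ?_
  rw [← BeeWorld.eulerLagrange, BeeWorld.eulerLagrange_eq hc hdy hy' t]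
  exact mul_eq_zero_iff_left (exp_ne_zero _)

/-- The Euler–Lagrange equation for the smoothed Bee World cost
`F(t, y, v) = γᵗ(−ε log(cos(πv/(2c))) − cos(ωt) sin(2πy) − 1)` along a `C²` trajectory
with `|y'| < c` is equivalent to the second-order ODE
`(πε/(2c))(log γ · tan(πy'/(2c)) + (πy''/(2c)) sec²(πy'/(2c))) + 2π cos(ωt) cos(2πy) = 0`
(Section 4.3 of the paper). -/
theorem stmt10 (c ε ω γ : ℝ) (hc : 0 < c) (hε : 0 < ε) (hγ0 : 0 < γ) (hγ1 : γ < 1)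
    (F : ℝ → ℝ → ℝ → ℝ)
    (hF : ∀ t y v, F t y v = Real.exp (t * Real.log γ) *
      (-ε * Real.log (Real.cos (π * v / (2 * c)))
        - Real.cos (ω * t) * Real.sin (2 * π * y) - 1))
    (y : ℝ → ℝ) (hy : ContDiff ℝ 2 y) (hy' : ∀ t, |deriv y t| < c) :
    (∀ t : ℝ,
        deriv (fun s => deriv (fun v => F s (y s) v) (deriv y s)) t
          - deriv (fun u => F t u (deriv y t)) (y t) = 0) ↔
    (∀ t : ℝ,
        (π * ε / (2 * c)) *
            (Real.log γ * Real.tan (π * deriv y t / (2 * c))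
              + (π * deriv (deriv y) t / (2 * c)) *
                  (1 / Real.cos (π * deriv y t / (2 * c))) ^ 2)
          + 2 * π * Real.cos (ω * t) * Real.cos (2 * π * y t) = 0) :=
  stmt10_general c ε ω γ hc F hF y hy hy'
end
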